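/- arXiv:0912.4984 — 2 statements merged into one kernel-verified Lean document; each statement's English description precedes it below -/
import Mathlib

section
/- Let C be a finite length abelian category and A the heart category of complexes [A \to B \xrightarrow{d} C] with first map injective and exact at the middle (morphisms modulo homotopy). Suppose C (the degree-0 term) is indecomposable in the category C. Then the object X = [A \to B \xrightarrow{d} C] is a simple object of A if and only if d : B \to C is a right almost split map. -/
open CategoryTheory Limits

namespace ARHeart

variable (C : Type*) [Category C] [Abelian C]

/-- Objects of the heart `𝒜`: complexes `[A ⟶ B ⟶ Z]` in degrees `-2, -1, 0`
with the first map a monomorphism and `Ker g = Im f`. -/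
structure Obj : Type _ where
  A : C
  B : C
  Z : C
  f : A ⟶ B
  g : B ⟶ Z
  w : f ≫ g = 0
  mono : Mono f
  exact : (ShortComplex.mk f g w).Exact

variable {C}

/-- Chain maps between heart objects. -/
@[ext]
structure Hom (V W : Obj C) where
  a : V.A ⟶ W.A
  b : V.B ⟶ W.B
  c : V.Z ⟶ W.Z
  comm₁ : V.f ≫ b = a ≫ W.f
  comm₂ : V.g ≫ c = b ≫ W.g

namespace Hom

variable {U V W : Obj C}

instance : Zero (Hom V W) := ⟨⟨0, 0, 0, by simp, by simp⟩⟩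
instance : Add (Hom V W) :=
  ⟨fun φ ψ => ⟨φ.a + ψ.a, φ.b + ψ.b, φ.c + ψ.c,
    by simp [Preadditive.comp_add, Preadditive.add_comp, φ.comm₁, ψ.comm₁],
    by simp [Preadditive.comp_add, Preadditive.add_comp, φ.comm₂, ψ.comm₂]⟩⟩
instance : Neg (Hom V W) :=
  ⟨fun φ => ⟨-φ.a, -φ.b, -φ.c,
    by simp [φ.comm₁], by simp [φ.comm₂]⟩⟩
instance : Sub (Hom V W) :=
  ⟨fun φ ψ => ⟨φ.a - ψ.a, φ.b - ψ.b, φ.c - ψ.c,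
    by simp [Preadditive.comp_sub, Preadditive.sub_comp, φ.comm₁, ψ.comm₁],
    by simp [Preadditive.comp_sub, Preadditive.sub_comp, φ.comm₂, ψ.comm₂]⟩⟩
instance : SMul ℕ (Hom V W) :=
  ⟨fun n φ => ⟨n • φ.a, n • φ.b, n • φ.c,
    by simp [φ.comm₁], by simp [φ.comm₂]⟩⟩
instance : SMul ℤ (Hom V W) :=
  ⟨fun n φ => ⟨n • φ.a, n • φ.b, n • φ.c,
    by simp [φ.comm₁], by simp [φ.comm₂]⟩⟩

@[simp] lemma add_a (φ ψ : Hom V W) : (φ + ψ).a = φ.a + ψ.a := rfl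
@[simp] lemma add_b (φ ψ : Hom V W) : (φ + ψ).b = φ.b + ψ.b := rfl
@[simp] lemma add_c (φ ψ : Hom V W) : (φ + ψ).c = φ.c + ψ.c := rfl
@[simp] lemma sub_a (φ ψ : Hom V W) : (φ - ψ).a = φ.a - ψ.a := rfl
@[simp] lemma sub_b (φ ψ : Hom V W) : (φ - ψ).b = φ.b - ψ.b := rfl
@[simp] lemma sub_c (φ ψ : Hom V W) : (φ - ψ).c = φ.c - ψ.c := rfl
@[simp] lemma neg_a (φ : Hom V W) : (-φ).a = -φ.a := rfl
@[simp] lemma neg_b (φ : Hom V W) : (-φ).b = -φ.b := rfl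
@[simp] lemma neg_c (φ : Hom V W) : (-φ).c = -φ.c := rfl
@[simp] lemma zero_a : (0 : Hom V W).a = 0 := rfl
@[simp] lemma zero_b : (0 : Hom V W).b = 0 := rfl
@[simp] lemma zero_c : (0 : Hom V W).c = 0 := rfl

instance : AddCommGroup (Hom V W) :=
  Function.Injective.addCommGroup
    (fun φ => (φ.a, φ.b, φ.c))
    (fun φ ψ h => by
      ext <;> simp only [Prod.mk.injEq] at h <;> tauto)
    rfl (fun _ _ => rfl) (fun _ => rfl) (fun _ _ => rfl) (fun _ _ => rfl) (fun _ _ => rfl)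

/-- Identity chain map. -/
def id (V : Obj C) : Hom V V := ⟨𝟙 _, 𝟙 _, 𝟙 _, by simp, by simp⟩

/-- Composition of chain maps. -/
def comp (φ : Hom U V) (ψ : Hom V W) : Hom U W :=
  ⟨φ.a ≫ ψ.a, φ.b ≫ ψ.b, φ.c ≫ ψ.c,
    by rw [← Category.assoc, φ.comm₁, Category.assoc, ψ.comm₁, Category.assoc],
    by rw [← Category.assoc, φ.comm₂, Category.assoc, ψ.comm₂, Category.assoc]⟩

@[simp] lemma comp_a (φ : Hom U V) (ψ : Hom V W) : (φ.comp ψ).a = φ.a ≫ ψ.a := rfl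
@[simp] lemma comp_b (φ : Hom U V) (ψ : Hom V W) : (φ.comp ψ).b = φ.b ≫ ψ.b := rfl
@[simp] lemma comp_c (φ : Hom U V) (ψ : Hom V W) : (φ.comp ψ).c = φ.c ≫ ψ.c := rfl

lemma sub_comp (φ φ' : Hom U V) (ψ : Hom V W) :
    (φ - φ').comp ψ = φ.comp ψ - φ'.comp ψ := by
  ext <;> simp [Preadditive.sub_comp]

lemma comp_sub (φ : Hom U V) (ψ ψ' : Hom V W) :
    φ.comp (ψ - ψ') = φ.comp ψ - φ.comp ψ' := by
  ext <;> simp [Preadditive.comp_sub]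

lemma add_comp (φ φ' : Hom U V) (ψ : Hom V W) :
    (φ + φ').comp ψ = φ.comp ψ + φ'.comp ψ := by
  ext <;> simp [Preadditive.add_comp]

lemma comp_add (φ : Hom U V) (ψ ψ' : Hom V W) :
    φ.comp (ψ + ψ') = φ.comp ψ + φ.comp ψ' := by
  ext <;> simp [Preadditive.comp_add]

end Hom

/-- The subgroup of chain maps homotopic to zero. -/
def nullHomotopic (V W : Obj C) : AddSubgroup (Hom V W) where
  carrier := {χ | ∃ (s₁ : V.B ⟶ W.A) (s₀ : V.Z ⟶ W.B),
    χ.a = V.f ≫ s₁ ∧ χ.b = V.g ≫ s₀ + s₁ ≫ W.f ∧ χ.c = s₀ ≫ W.g}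
  add_mem' := by
    rintro χ χ' ⟨s₁, s₀, h1, h2, h3⟩ ⟨t₁, t₀, h1', h2', h3'⟩
    exact ⟨s₁ + t₁, s₀ + t₀, by
      simp [h1, h1', Preadditive.comp_add], by
      simp only [Hom.add_b, h2, h2', Preadditive.comp_add, Preadditive.add_comp]
      abel, by simp [h3, h3', Preadditive.add_comp]⟩
  zero_mem' := ⟨0, 0, by simp, by simp, by simp⟩
  neg_mem' := by
    rintro χ ⟨s₁, s₀, h1, h2, h3⟩
    exact ⟨-s₁, -s₀, by simp [h1], by simp [h2]; abel, by simp [h3]⟩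

lemma comp_null {U V W : Obj C} (χ : Hom U V) (ψ : Hom V W)
    (h : χ ∈ nullHomotopic U V) : χ.comp ψ ∈ nullHomotopic U W := by
  obtain ⟨s₁, s₀, h1, h2, h3⟩ := h
  refine ⟨s₁ ≫ ψ.a, s₀ ≫ ψ.b, ?_, ?_, ?_⟩
  · simp [h1]
  · simp only [Hom.comp_b, h2, Preadditive.add_comp, Category.assoc, ψ.comm₁]
  · simp only [Hom.comp_c, h3, Category.assoc, ψ.comm₂]

lemma null_comp {U V W : Obj C} (φ : Hom U V) (χ : Hom V W)
    (h : χ ∈ nullHomotopic V W) : φ.comp χ ∈ nullHomotopic U W := by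
  obtain ⟨s₁, s₀, h1, h2, h3⟩ := h
  refine ⟨φ.b ≫ s₁, φ.c ≫ s₀, ?_, ?_, ?_⟩
  · simp only [Hom.comp_a, h1, ← Category.assoc, φ.comm₁]
  · simp only [Hom.comp_b, h2, Preadditive.comp_add, ← Category.assoc, φ.comm₂]
  · simp [h3]

instance instCategory : Category (Obj C) where
  Hom V W := Hom V W ⧸ nullHomotopic V W
  id V := QuotientAddGroup.mk (Hom.id V)
  comp := Quotient.map₂ Hom.comp (by
    intro φ φ' hφ ψ ψ' hψ
    replace hφ := QuotientAddGroup.leftRel_apply.mp hφ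
    replace hψ := QuotientAddGroup.leftRel_apply.mp hψ
    refine QuotientAddGroup.leftRel_apply.mpr ?_
    have : -φ.comp ψ + φ'.comp ψ' = (-φ + φ').comp ψ' + φ.comp (-ψ + ψ') := by
      refine Hom.ext ?_ ?_ ?_ <;>
        simp [Hom.comp, Preadditive.add_comp, Preadditive.comp_add,
          Preadditive.neg_comp, Preadditive.comp_neg] <;> abel
    rw [this]
    exact AddSubgroup.add_mem _ (comp_null _ _ hφ) (null_comp _ _ hψ))
  id_comp := by
    rintro V W ⟨φ⟩
    exact congrArg (QuotientAddGroup.mk)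
      (Hom.ext (by simp [Hom.comp, Hom.id]) (by simp [Hom.comp, Hom.id])
        (by simp [Hom.comp, Hom.id]))
  comp_id := by
    rintro V W ⟨φ⟩
    exact congrArg (QuotientAddGroup.mk)
      (Hom.ext (by simp [Hom.comp, Hom.id]) (by simp [Hom.comp, Hom.id])
        (by simp [Hom.comp, Hom.id]))
  assoc := by
    rintro U V W X ⟨φ⟩ ⟨ψ⟩ ⟨ρ⟩
    exact congrArg (QuotientAddGroup.mk)
      (Hom.ext (by simp [Hom.comp]) (by simp [Hom.comp]) (by simp [Hom.comp]))

/-- The homotopy class of a chain map, as a morphism in the heart. -/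
def mkHom {V W : Obj C} (φ : Hom V W) : V ⟶ W := QuotientAddGroup.mk φ

lemma mkHom_surjective {V W : Obj C} : Function.Surjective (mkHom (V := V) (W := W)) :=
  fun q => Quotient.inductionOn q (fun φ => ⟨φ, rfl⟩)

@[simp] lemma mkHom_comp {U V W : Obj C} (φ : Hom U V) (ψ : Hom V W) :
    mkHom φ ≫ mkHom ψ = mkHom (φ.comp ψ) := rfl

instance homAddCommGroup (V W : Obj C) : AddCommGroup (V ⟶ W) :=
  inferInstanceAs (AddCommGroup (Hom V W ⧸ nullHomotopic V W))

lemma mkHom_add {V W : Obj C} (φ ψ : Hom V W) :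
    (mkHom (φ + ψ) : V ⟶ W) = mkHom φ + mkHom ψ := rfl

instance : Preadditive (Obj C) where
  homGroup := homAddCommGroup
  add_comp := by
    rintro U V W ⟨φ⟩ ⟨φ'⟩ ⟨ψ⟩
    show mkHom ((φ + φ').comp ψ) = mkHom ((φ.comp ψ) + (φ'.comp ψ))
    rw [Hom.add_comp]
  comp_add := by
    rintro U V W ⟨φ⟩ ⟨ψ⟩ ⟨ψ'⟩
    show mkHom (φ.comp (ψ + ψ')) = mkHom ((φ.comp ψ) + (φ.comp ψ'))
    rw [Hom.comp_add]

open ZeroObject in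
/-- The object `P_X = [0 ⟶ 0 ⟶ X]`. -/
noncomputable def P (X : C) : Obj C where
  A := 0
  B := 0
  Z := X
  f := 0
  g := 0
  w := by simp
  mono := by infer_instance
  exact := ShortComplex.exact_of_isZero_X₂ _ (isZero_zero C)

/-- The functor `P : C ⥤ 𝒜`, `X ↦ [0 ⟶ 0 ⟶ X]`. -/
noncomputable def Pfunctor : C ⥤ Obj C where
  obj := P
  map {X Y} u := mkHom ⟨0, 0, u, by simp [P]; rfl, by simp [P]; exact zero_comp.symm⟩
  map_id X := congrArg QuotientAddGroup.mk
    (Hom.ext (by simp [Hom.id, P]; rfl) (by simp [Hom.id, P]; rfl) (by simp [Hom.id, P]))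
  map_comp {X Y Z} u v := congrArg QuotientAddGroup.mk
    (Hom.ext (by simp [Hom.comp]) (by simp [Hom.comp]) (by simp [Hom.comp]; rfl))

/-- The heart object `[Ker g ⟶ B ⟶ Z]` associated to a morphism `g : B ⟶ Z`. -/
noncomputable def kernelObj {B Z : C} (g : B ⟶ Z) : Obj C where
  A := kernel g
  B := B
  Z := Z
  f := kernel.ι g
  g := g
  w := kernel.condition g
  mono := inferInstance
  exact := ShortComplex.exact_of_f_is_kernel _ (kernelIsKernel g)

end ARHeart


open CategoryTheory Limits in
/-- A morphism `g : B ⟶ Z` is right almost split if it is not a split epimorphism and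
every morphism `X ⟶ Z` which is not a split epimorphism factors through `g`. -/
def RightAlmostSplit {C : Type*} [Category C] {B Z : C} (g : B ⟶ Z) : Prop :=
  (¬ ∃ s : Z ⟶ B, s ≫ g = 𝟙 Z) ∧
  ∀ (X : _) (φ : X ⟶ Z), (¬ ∃ s : Z ⟶ X, s ≫ φ = 𝟙 Z) → ∃ h : X ⟶ B, h ≫ g = φ

namespace FittingAux

variable {C : Type*} [Category C] [Abelian C]

def itc {Z : C} (e : Z ⟶ Z) : ℕ → (Z ⟶ Z)
  | 0 => 𝟙 Z
  | n+1 => itc e n ≫ e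

lemma itc_add {Z : C} (e : Z ⟶ Z) (m n : ℕ) :
    itc e (m + n) = itc e m ≫ itc e n := by
  induction n with
  | zero => simp [itc]
  | succ n ih =>
      show itc e ((m + n) + 1) = _
      rw [itc, ih, itc, Category.assoc]

lemma itc_succ' {Z : C} (e : Z ⟶ Z) (n : ℕ) :
    itc e (n + 1) = e ≫ itc e n := by
  have h := itc_add e 1 n
  rw [Nat.add_comm 1 n] at h
  simpa [itc] using h

lemma fitting {Z : C}
    (hN : WellFounded ((· > ·) : Subobject Z → Subobject Z → Prop))
    (hA : WellFounded ((· < ·) : Subobject Z → Subobject Z → Prop))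
    (hZ : Indecomposable Z) (e : Z ⟶ Z) :
    IsIso e ∨ ∃ n : ℕ, itc e (n + 1) = 0 := by
  -- stabilization of the kernel chain
  have kmono : Monotone fun m => kernelSubobject (itc e m) :=
    monotone_nat_of_le_succ (fun m => kernelSubobject_comp_le (itc e m) e)
  have ianti : Antitone fun m => imageSubobject (itc e m) := by
    apply antitone_nat_of_succ_le
    intro m
    rw [show itc e (m+1) = e ≫ itc e m from itc_succ' e m]
    exact imageSubobject_comp_le e (itc e m)
  obtain ⟨N₁, hN₁⟩ := wellFoundedGT_iff_monotone_chain_condition.mp ⟨hN⟩ ⟨_, kmono⟩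
  have hA' : WellFounded ((· > ·) : (Subobject Z)ᵒᵈ → (Subobject Z)ᵒᵈ → Prop) := by
    exact hA
  obtain ⟨N₂, hN₂⟩ := wellFoundedGT_iff_monotone_chain_condition.mp ⟨hA'⟩
    ⟨fun m => OrderDual.toDual (imageSubobject (itc e m)), fun i j hij => by exact ianti hij⟩
  set n : ℕ := N₁ + N₂ + 1 with hn
  set k : Z ⟶ Z := itc e n with hkdef
  have hker : kernelSubobject (k ≫ k) = kernelSubobject k := by
    rw [hkdef, ← itc_add]
    exact ((hN₁ n (by omega)).symm.trans (hN₁ (n + n) (by omega))).symm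
  have him : imageSubobject (k ≫ k) = imageSubobject k := by
    rw [hkdef, ← itc_add]
    have h2 := hN₂ n (by omega)
    have h3 := hN₂ (n + n) (by omega)
    exact OrderDual.toDual.injective (h3.symm.trans h2)
  -- notation
  set ι : (imageSubobject k : C) ⟶ Z := (imageSubobject k).arrow with hι
  set fac : Z ⟶ (imageSubobject k : C) := factorThruImageSubobject k with hfac
  have hfi : fac ≫ ι = k := imageSubobject_arrow_comp k
  obtain ⟨k', hk'⟩ : ∃ q : (imageSubobject k : C) ⟶ (imageSubobject k : C), q = ι ≫ fac :=
    ⟨_, rfl⟩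
  have hk'ι : k' ≫ ι = ι ≫ k := by rw [hk', Category.assoc, hfi]
  have hkk' : fac ≫ k' = k ≫ fac := by rw [hk', ← Category.assoc, hfi]
  have hkk2 : k ≫ k = fac ≫ k' ≫ ι := by rw [hk'ι, ← Category.assoc, hfi]
  have hkfac : Epi (k ≫ fac) := by
    have heq : k ≫ fac =
        factorThruImageSubobject (k ≫ k) ≫ (Subobject.isoOfEq _ _ him).hom := by
      rw [← cancel_mono ι]
      rw [Category.assoc, hfi, Category.assoc]
      rw [hι, Subobject.isoOfEq_hom, Subobject.ofLE_arrow, imageSubobject_arrow_comp]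
    rw [heq]; infer_instance
  have hk'epi : Epi k' := by
    have : Epi (fac ≫ k') := by rw [hkk']; exact hkfac
    exact epi_of_epi fac k'
  have hk'mono : Mono k' := by
    apply Preadditive.mono_of_cancel_zero
    intro T t ht
    have h1 : pullback.fst fac t ≫ (k ≫ k) = 0 := by
      rw [hkk2, ← Category.assoc, pullback.condition, Category.assoc, ← Category.assoc t,
        ht, zero_comp, comp_zero]
    have harr : (kernelSubobject (k ≫ k)).arrow ≫ k = 0 := by
      rw [← Subobject.ofLE_arrow hker.le, Category.assoc, kernelSubobject_arrow_comp,
        comp_zero]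
    have h2 : pullback.fst fac t ≫ k = 0 := by
      rw [← factorThruKernelSubobject_comp_arrow (k ≫ k) (pullback.fst fac t) h1,
        Category.assoc, harr, comp_zero]
    have h3 : pullback.snd fac t ≫ (t ≫ ι) = 0 := by
      rw [← Category.assoc, ← pullback.condition, Category.assoc, hfi, h2]
    have h4 : t ≫ ι = 0 := zero_of_epi_comp _ h3
    exact zero_of_comp_mono ι h4
  haveI := hk'mono
  haveI := hk'epi
  haveI : IsIso k' := isIso_of_mono_of_epi k'
  obtain ⟨f1, hf1⟩ : ∃ q : Z ⟶ (imageSubobject k : C), q = fac ≫ inv k' := ⟨_, rfl⟩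
  have hretr : ι ≫ f1 = 𝟙 _ := by
    rw [hf1, ← Category.assoc, ← hk', IsIso.hom_inv_id]
  have hπ : (f1 ≫ ι) ≫ (f1 ≫ ι) = f1 ≫ ι := by
    rw [Category.assoc, ← Category.assoc ι, hretr, Category.id_comp]
  obtain ⟨r, hrι⟩ : ∃ r : Z ⟶ kernel (f1 ≫ ι), r ≫ kernel.ι (f1 ≫ ι) = 𝟙 Z - f1 ≫ ι :=
    ⟨kernel.lift _ (𝟙 Z - f1 ≫ ι)
      (by rw [Preadditive.sub_comp, Category.id_comp, hπ, sub_self]), kernel.lift_ι _ _ _⟩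
  have h11 : kernel.ι (f1 ≫ ι) ≫ r = 𝟙 _ := by
    rw [← cancel_mono (kernel.ι (f1 ≫ ι)), Category.assoc, hrι,
      Preadditive.comp_sub, Category.comp_id, kernel.condition, sub_zero, Category.id_comp]
  have h12 : kernel.ι (f1 ≫ ι) ≫ f1 = 0 := by
    rw [← cancel_mono ι, Category.assoc, kernel.condition, zero_comp]
  have h21 : ι ≫ r = 0 := by
    rw [← cancel_mono (kernel.ι (f1 ≫ ι)), Category.assoc, hrι,
      Preadditive.comp_sub, Category.comp_id, ← Category.assoc, hretr, Category.id_comp,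
      sub_self, zero_comp]
  have hFG : biprod.lift r f1 ≫ biprod.desc (kernel.ι (f1 ≫ ι)) ι = 𝟙 Z := by
    rw [biprod.lift_desc, hrι]; abel
  have hGF : biprod.desc (kernel.ι (f1 ≫ ι)) ι ≫ biprod.lift r f1 = 𝟙 _ := by
    apply biprod.hom_ext' <;> apply biprod.hom_ext <;>
      simp [h11, h12, h21, hretr]
  have hk1 : k = e ≫ itc e (N₁ + N₂) := by
    rw [hkdef, hn]; exact itc_succ' e (N₁ + N₂)
  have hk2 : itc e (N₁ + N₂) ≫ e = k := by
    rw [hkdef, hn]; rfl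
  rcases hZ.2 _ _ ⟨biprod.lift r f1, biprod.desc (kernel.ι (f1 ≫ ι)) ι, hFG, hGF⟩ with hK | hI
  · -- kernel of the idempotent is zero: e is an isomorphism
    left
    have hkι0 : kernel.ι (f1 ≫ ι) = 0 := hK.eq_of_src _ _
    have hone : f1 ≫ ι = 𝟙 Z := by
      rw [← hFG, biprod.lift_desc, hkι0, comp_zero, zero_add]
    have hkmono : Mono k := by
      apply Preadditive.mono_of_cancel_zero
      intro T t ht
      have h5 : t ≫ fac = 0 := by
        apply zero_of_comp_mono ι
        rw [Category.assoc, hfi, ht]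
      have h5' : t ≫ f1 = 0 := by rw [hf1, ← Category.assoc, h5, zero_comp]
      rw [← Category.comp_id t, ← hone, ← Category.assoc, h5', zero_comp]
    have hkepi : Epi k := by
      apply Preadditive.epi_of_cancel_zero
      intro T w hw
      have h5 : ι ≫ w = 0 := by
        have : fac ≫ ι ≫ w = 0 := by rw [← Category.assoc, hfi, hw]
        exact zero_of_epi_comp fac this
      rw [← Category.id_comp w, ← hone, Category.assoc, h5, comp_zero]
    have hemono : Mono e := by
      apply Preadditive.mono_of_cancel_zero
      intro T t ht
      have h6 : t ≫ k = 0 := by rw [hk1, ← Category.assoc, ht, zero_comp]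
      exact hkmono.right_cancellation t 0 (by rw [h6, zero_comp])
    have heepi : Epi e := by
      apply Preadditive.epi_of_cancel_zero
      intro T w hw
      have h6 : k ≫ w = 0 := by rw [← hk2, Category.assoc, hw, comp_zero]
      exact hkepi.left_cancellation w 0 (by rw [h6, comp_zero])
    exact isIso_of_mono_of_epi e
  · right
    refine ⟨N₁ + N₂, ?_⟩
    have hι0 : ι = 0 := hI.eq_of_src _ _
    have h7 : itc e (N₁ + N₂ + 1) = k := by rw [hkdef, hn]
    rw [h7, ← hfi, hι0, comp_zero]

lemma isIso_one_sub {Z : C} {x : Z ⟶ Z} (n : ℕ) (hx : itc x (n + 1) = 0) :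
    IsIso (𝟙 Z - x) := by
  set w : Z ⟶ Z := (Finset.range (n + 1)).sum (itc x) with hw
  have key : ∀ m : ℕ, ((𝟙 Z - x) ≫ (Finset.range (m + 1)).sum (itc x) = 𝟙 Z - itc x (m + 1)) ∧
      ((Finset.range (m + 1)).sum (itc x) ≫ (𝟙 Z - x) = 𝟙 Z - itc x (m + 1)) := by
    intro m
    induction m with
    | zero =>
        constructor <;> simp [itc, Finset.sum_range_one, Preadditive.sub_comp, Preadditive.comp_sub]
    | succ m ih =>
        obtain ⟨ih1, ih2⟩ := ih
        have hstep : itc x (m + 1) ≫ x = itc x (m + 2) := rfl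
        constructor
        · rw [Finset.sum_range_succ, Preadditive.comp_add, ih1, Preadditive.sub_comp,
            Category.id_comp, ← itc_succ']
          abel
        · rw [Finset.sum_range_succ, Preadditive.add_comp, ih2, Preadditive.comp_sub,
            Category.comp_id, hstep]
          abel
  refine ⟨w, ?_, ?_⟩
  · rw [hw, (key n).1, hx, sub_zero]
  · rw [hw, (key n).2, hx, sub_zero]

lemma isIso_of_add_eq_id {Z : C}
    (hN : WellFounded ((· > ·) : Subobject Z → Subobject Z → Prop))
    (hA : WellFounded ((· < ·) : Subobject Z → Subobject Z → Prop))
    (hZ : Indecomposable Z) {x y : Z ⟶ Z}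
    (hxy : x + y = 𝟙 Z) (hx : ¬ IsIso x) : IsIso y := by
  rcases fitting hN hA hZ x with h | ⟨n, hn⟩
  · exact absurd h hx
  · have hy : y = 𝟙 Z - x := by rw [← hxy]; abel
    rw [hy]
    exact isIso_one_sub n hn

end FittingAux

namespace ARHeart

open CategoryTheory Limits

variable {C : Type*} [Category C] [Abelian C]

lemma mkHom_eq_zero_iff {V W : Obj C} (φ : Hom V W) :
    mkHom φ = (0 : V ⟶ W) ↔ φ ∈ nullHomotopic V W :=
  QuotientAddGroup.eq_zero_iff φ

lemma mkHom_sub {V W : Obj C} (φ ψ : Hom V W) :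
    (mkHom (φ - ψ) : V ⟶ W) = mkHom φ - mkHom ψ := rfl

lemma mkHom_eq_iff {V W : Obj C} (φ ψ : Hom V W) :
    mkHom φ = mkHom ψ ↔ φ - ψ ∈ nullHomotopic V W := by
  rw [← mkHom_eq_zero_iff, mkHom_sub, sub_eq_zero]

lemma id_eq_mkHom (V : Obj C) : (𝟙 V : V ⟶ V) = mkHom (Hom.id V) := rfl

/-- Lift a morphism killed by `V.g` through the mono `V.f`, using exactness. -/
noncomputable def Obj.lft (V : Obj C) {T : C} (h : T ⟶ V.B) (hh : h ≫ V.g = 0) : T ⟶ V.A :=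
  haveI := V.mono
  V.exact.lift h hh

lemma Obj.lft_f (V : Obj C) {T : C} (h : T ⟶ V.B) (hh : h ≫ V.g = 0) :
    V.lft h hh ≫ V.f = h := by
  haveI := V.mono
  exact V.exact.lift_f h hh

/-- The canonical chain map `P V.Z ⟶ V`. -/
noncomputable def pCh (V : Obj C) : Hom (P V.Z) V where
  a := 0
  b := 0
  c := 𝟙 V.Z
  comm₁ := by simp [P]; exact zero_comp.trans zero_comp.symm
  comm₂ := by simp [P]; exact zero_comp.symm

/-- `mkHom (pCh V)` is an epimorphism: chain-level statement. -/
lemma pCh_cancel {V W : Obj C} (ψ : Hom V W)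
    (h : (pCh V).comp ψ ∈ nullHomotopic (P V.Z) W) : ψ ∈ nullHomotopic V W := by
  obtain ⟨s₁, s₀, h1, h2, h3⟩ := h
  change V.Z ⟶ W.B at s₀
  have hc : ψ.c = s₀ ≫ W.g := (Category.id_comp ψ.c).symm.trans h3
  have hδ : (ψ.b - V.g ≫ s₀) ≫ W.g = 0 := by
    rw [Preadditive.sub_comp, ← ψ.comm₂, hc, Category.assoc, sub_self]
  refine ⟨W.lft (ψ.b - V.g ≫ s₀) hδ, s₀, ?_, ?_, hc⟩
  · haveI := W.mono
    rw [← cancel_mono W.f, Category.assoc, W.lft_f, Preadditive.comp_sub, ψ.comm₁,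
      ← Category.assoc, V.w, zero_comp, sub_zero]
  · rw [W.lft_f]; abel

lemma p_cancel {V W : Obj C} (q q' : V ⟶ W)
    (h : mkHom (pCh V) ≫ q = mkHom (pCh V) ≫ q') : q = q' := by
  obtain ⟨a, rfl⟩ := mkHom_surjective q
  obtain ⟨b, rfl⟩ := mkHom_surjective q'
  rw [mkHom_comp, mkHom_comp, mkHom_eq_iff, ← Hom.comp_sub] at h
  rw [mkHom_eq_iff]
  exact pCh_cancel _ h

lemma id_null_iff (V : Obj C) :
    Hom.id V ∈ nullHomotopic V V ↔ ∃ s : V.Z ⟶ V.B, s ≫ V.g = 𝟙 V.Z := by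
  constructor
  · rintro ⟨s₁, s₀, -, -, hc⟩
    exact ⟨s₀, hc.symm⟩
  · rintro ⟨s, hs⟩
    have h0 : (𝟙 V.B - V.g ≫ s) ≫ V.g = 0 := by
      rw [Preadditive.sub_comp, Category.id_comp, Category.assoc, hs, Category.comp_id,
        sub_self]
    refine ⟨V.lft _ h0, s, ?_, ?_, hs.symm⟩
    · haveI := V.mono
      show 𝟙 V.A = V.f ≫ V.lft _ h0
      rw [← cancel_mono V.f, Category.assoc, V.lft_f, Preadditive.comp_sub,
        Category.comp_id, ← Category.assoc, V.w, zero_comp, sub_zero, Category.id_comp]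
    · show 𝟙 V.B = V.g ≫ s + V.lft _ h0 ≫ V.f
      rw [V.lft_f]
      abel

open ZeroObject in
/-- The object `[0 ⟶ Ker g ⟶ B]`. -/
noncomputable def WObj (V : Obj C) : Obj C where
  A := 0
  B := kernel V.g
  Z := V.B
  f := 0
  g := kernel.ι V.g
  w := by simp
  mono := ⟨fun {T} u v _ => by
    apply (Limits.isZero_zero C).eq_of_tgt⟩
  exact := by
    rw [ShortComplex.exact_iff_mono _ rfl]
    infer_instance

/-- The chain map `WObj V ⟶ P V.Z` given by `V.g` in degree `0`. -/
noncomputable def kCh (V : Obj C) : Hom (WObj V) (P V.Z) where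
  a := 0
  b := 0
  c := V.g
  comm₁ := by simp [P, WObj]; exact zero_comp.trans zero_comp.symm
  comm₂ := by simp [P, WObj]; exact zero_comp.symm

open ZeroObject in
lemma k_p_null (V : Obj C) : (kCh V).comp (pCh V) ∈ nullHomotopic (WObj V) V := by
  have h0 : kernel.ι V.g ≫ V.g = 0 := kernel.condition _
  refine ⟨-(V.lft (kernel.ι V.g) h0), 𝟙 V.B, ?_, ?_, ?_⟩
  · exact (show ((0 : (0 : C) ⟶ (0 : C)) ≫ (0 : (0 : C) ⟶ V.A) =
      (0 : (0 : C) ⟶ kernel V.g) ≫ (-(V.lft (kernel.ι V.g) h0))) by simp)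
  · exact (show ((0 : kernel V.g ⟶ (0 : C)) ≫ (0 : (0 : C) ⟶ V.B) =
      kernel.ι V.g ≫ 𝟙 V.B + (-(V.lft (kernel.ι V.g) h0)) ≫ V.f) by simp [V.lft_f])
  · exact (show (V.g ≫ 𝟙 V.Z = 𝟙 V.B ≫ V.g) by simp)

end ARHeart

open CategoryTheory Limits ARHeart in
/-- over a finite length abelian category, a heart object
`[A ⟶ B —d→ C]` with indecomposable end term `C` is simple in the heart `𝒜` iff
`d : B ⟶ C` is a right almost split map. -/
theorem stmt12 {C : Type*} [Category C] [Abelian C]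
    (hFL : ∀ X : C, IsNoetherianObject X ∧ IsArtinianObject X)
    (V : ARHeart.Obj C) (hind : Indecomposable V.Z) :
    Simple V ↔ RightAlmostSplit V.g := by
  have hNwf : WellFounded ((· > ·) : Subobject V.Z → Subobject V.Z → Prop) :=
    by haveI := (hFL V.Z).1; exact IsWellFounded.wf
  have hAwf : WellFounded ((· < ·) : Subobject V.Z → Subobject V.Z → Prop) :=
    by haveI := (hFL V.Z).2; exact IsWellFounded.wf
  constructor
  · intro hS
    have hns : ¬ ∃ s : V.Z ⟶ V.B, s ≫ V.g = 𝟙 V.Z := by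
      intro hsp
      refine id_nonzero V ?_
      rw [id_eq_mkHom, mkHom_eq_zero_iff]
      exact (id_null_iff V).mpr hsp
    refine ⟨hns, fun X φ hφ => ?_⟩
    by_contra hfac
    -- the pullback object
    have hja : (kernel.ι (pullback.fst φ V.g) ≫ pullback.snd φ V.g) ≫ V.g = 0 := by
      rw [Category.assoc, ← pullback.condition, ← Category.assoc, kernel.condition, zero_comp]
    obtain ⟨j, hj⟩ : ∃ j : Hom (kernelObj (pullback.fst φ V.g)) V,
        j = ⟨V.lft _ hja, pullback.snd φ V.g, φ, (V.lft_f _ hja).symm, pullback.condition⟩ :=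
      ⟨_, rfl⟩
    have hjb : j.b = pullback.snd φ V.g := by rw [hj]
    have hjc : j.c = φ := by rw [hj]
    -- j is a monomorphism in the heart
    haveI hjm : Mono (mkHom j) := by
      apply Preadditive.mono_of_cancel_zero
      intro T qq hqq
      obtain ⟨ρ, rfl⟩ := mkHom_surjective qq
      rw [mkHom_comp, mkHom_eq_zero_iff] at hqq
      rw [mkHom_eq_zero_iff]
      obtain ⟨s₁, s₀, h1, h2, h3⟩ := hqq
      have h3' : ρ.c ≫ φ = s₀ ≫ V.g := by
        simpa only [Hom.comp_c, hjc] using h3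

      have hcomm2 : T.g ≫ ρ.c = ρ.b ≫ pullback.fst φ V.g := ρ.comm₂
      have hcomm1 : T.f ≫ ρ.b = ρ.a ≫ kernel.ι (pullback.fst φ V.g) := ρ.comm₁
      have hδ : (ρ.b - (T.g ≫ pullback.lift ρ.c s₀ h3' :
          T.B ⟶ (kernelObj (pullback.fst φ V.g)).B)) ≫ pullback.fst φ V.g = 0 := by
        erw [Preadditive.sub_comp, Category.assoc, pullback.lift_fst, hcomm2, sub_self]
      refine ⟨kernel.lift _ _ hδ, pullback.lift ρ.c s₀ h3', ?_, ?_, ?_⟩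
      · show ρ.a = T.f ≫ kernel.lift _ _ hδ
        apply (cancel_mono (kernel.ι (pullback.fst φ V.g))).mp
        erw [Category.assoc, kernel.lift_ι,
          Preadditive.comp_sub, hcomm1, ← Category.assoc, T.w, zero_comp, sub_zero]
        rfl
      · erw [kernel.lift_ι]
        abel
      · show ρ.c = pullback.lift ρ.c s₀ h3' ≫ pullback.fst φ V.g
        exact (pullback.lift_fst _ _ _).symm
    -- j is nonzero
    have hjnz : mkHom j ≠ 0 := by
      intro h0
      apply hfac
      have hu1 : (P X).f ≫ (0 : (P X).B ⟶ V.B) = (0 : (P X).A ⟶ V.A) ≫ V.f := by simp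
      have hu2 : (P X).g ≫ (φ : (P X).Z ⟶ V.Z) = (0 : (P X).B ⟶ V.B) ≫ V.g :=
        (show (0 : (P X).B ⟶ (P X).Z) ≫ (φ : (P X).Z ⟶ V.Z) =
          (0 : (P X).B ⟶ V.B) ≫ V.g by simp; exact zero_comp)
      obtain ⟨u, hu⟩ : ∃ u : Hom (P X) V, u = ⟨0, 0, φ, hu1, hu2⟩ := ⟨_, rfl⟩
      have hx1 : (P X).f ≫ (0 : (P X).B ⟶ (kernelObj (pullback.fst φ V.g)).B) =
          (0 : (P X).A ⟶ (kernelObj (pullback.fst φ V.g)).A) ≫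
            (kernelObj (pullback.fst φ V.g)).f := by simp
      have hx2 : (P X).g ≫ (𝟙 X : (P X).Z ⟶ (kernelObj (pullback.fst φ V.g)).Z) =
          (0 : (P X).B ⟶ (kernelObj (pullback.fst φ V.g)).B) ≫
            (kernelObj (pullback.fst φ V.g)).g :=
        (show (0 : (P X).B ⟶ X) ≫ 𝟙 X =
          (0 : (P X).B ⟶ pullback φ V.g) ≫ pullback.fst φ V.g by simp)
      obtain ⟨qX, hqX⟩ : ∃ qX : Hom (P X) (kernelObj (pullback.fst φ V.g)),
          qX = ⟨0, 0, 𝟙 X, hx1, hx2⟩ := ⟨_, rfl⟩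
      have hcompu : qX.comp j = u := by
        refine Hom.ext ?_ ?_ ?_
        · show qX.a ≫ j.a = u.a
          rw [hqX, hu]
          exact zero_comp
        · show qX.b ≫ j.b = u.b
          rw [hqX, hu]
          exact zero_comp
        · show qX.c ≫ j.c = u.c
          rw [hqX, hu, hjc]
          exact Category.id_comp φ
      have h1 : mkHom u = 0 := by
        rw [← hcompu, ← mkHom_comp, h0, comp_zero]
      rw [mkHom_eq_zero_iff] at h1
      obtain ⟨s₁, s₀, -, -, hcu⟩ := h1
      have hcu' : φ = s₀ ≫ V.g := by rw [hu] at hcu; exact hcu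
      exact ⟨s₀, hcu'.symm⟩
    haveI := hS
    haveI := hjm
    haveI : IsIso (mkHom j) := (Simple.mono_isIso_iff_nonzero (mkHom j)).mpr hjnz
    obtain ⟨rr, hrr⟩ := mkHom_surjective (inv (mkHom j))
    have hri : mkHom (rr.comp j) = mkHom (Hom.id V) := by
      rw [← mkHom_comp, hrr, ← id_eq_mkHom, IsIso.inv_hom_id]
    rw [mkHom_eq_iff] at hri
    obtain ⟨s₁, s₀, -, -, hc⟩ := hri
    have hc' : rr.c ≫ φ - 𝟙 V.Z = s₀ ≫ V.g := by
      simpa only [Hom.sub_c, Hom.comp_c, hjc, Hom.id] using hc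
    have hsum : rr.c ≫ φ + (-s₀) ≫ V.g = 𝟙 V.Z := by
      rw [sub_eq_iff_eq_add] at hc'
      rw [Preadditive.neg_comp, hc']
      abel
    have hx : ¬ IsIso (rr.c ≫ φ) := by
      intro hiso
      exact hφ ⟨inv (rr.c ≫ φ) ≫ rr.c, by erw [Category.assoc, IsIso.inv_hom_id]⟩
    have hy : IsIso ((-s₀) ≫ V.g) := FittingAux.isIso_of_add_eq_id hNwf hAwf hind hsum hx
    exact hns ⟨inv ((-s₀) ≫ V.g) ≫ (-s₀), by rw [Category.assoc, IsIso.inv_hom_id]⟩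
  · intro hras
    constructor
    intro Y f hm
    haveI := hm
    have hid : (𝟙 V : V ⟶ V) ≠ 0 := by
      intro h
      apply hras.1
      apply (id_null_iff V).mp
      rw [← mkHom_eq_zero_iff, ← id_eq_mkHom]
      exact h
    constructor
    · intro hiso h0
      obtain ⟨g, hg1, hg2⟩ := hiso.out
      rw [h0, comp_zero] at hg2
      exact hid hg2.symm
    · intro hfnz
      obtain ⟨i, rfl⟩ := mkHom_surjective f
      -- the bottom component of i does not factor through V.g
      have hcnf : ¬ ∃ t : Y.Z ⟶ V.B, t ≫ V.g = i.c := by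
        rintro ⟨t, ht⟩
        apply hfnz
        apply p_cancel (mkHom i) 0
        rw [comp_zero, mkHom_comp, mkHom_eq_zero_iff]
        refine ⟨0, t, ?_, ?_, ?_⟩
        · exact (show (0 : (P Y.Z).A ⟶ Y.A) ≫ i.a =
            (0 : (P Y.Z).A ⟶ (P Y.Z).B) ≫ (0 : (P Y.Z).B ⟶ V.A) by simp)
        · exact (show (0 : (P Y.Z).B ⟶ Y.B) ≫ i.b =
            (0 : (P Y.Z).B ⟶ (P Y.Z).Z) ≫ t + (0 : (P Y.Z).B ⟶ V.A) ≫ V.f by simp; exact zero_comp.symm)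
        · exact (Category.id_comp i.c).trans ht.symm
      -- hence it is a split epimorphism
      obtain ⟨s, hs⟩ : ∃ s : V.Z ⟶ Y.Z, s ≫ i.c = 𝟙 V.Z := by
        by_contra hns2
        exact hcnf (hras.2 Y.Z i.c hns2)
      -- the canonical map P V.Z ⟶ Y
      have hq1 : (P V.Z).f ≫ (0 : (P V.Z).B ⟶ Y.B) = (0 : (P V.Z).A ⟶ Y.A) ≫ Y.f := by simp
      have hq2 : (P V.Z).g ≫ (s : (P V.Z).Z ⟶ Y.Z) = (0 : (P V.Z).B ⟶ Y.B) ≫ Y.g :=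
        (show (0 : (P V.Z).B ⟶ (P V.Z).Z) ≫ (s : (P V.Z).Z ⟶ Y.Z) =
          (0 : (P V.Z).B ⟶ Y.B) ≫ Y.g by simp; exact zero_comp)
      obtain ⟨q, hq⟩ : ∃ q : Hom (P V.Z) Y, q = ⟨0, 0, s, hq1, hq2⟩ := ⟨_, rfl⟩
      have hqb : q.b = 0 := by rw [hq]
      have hqc : q.c = s := by rw [hq]
      -- (kCh V).comp q is null-homotopic, since composing with the mono i kills it
      have hkq0 : (kCh V).comp q ∈ nullHomotopic (WObj V) Y := by
        rw [← mkHom_eq_zero_iff]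
        apply zero_of_comp_mono (mkHom i)
        rw [mkHom_comp]
        have hassoc : ((kCh V).comp q).comp i = (kCh V).comp (q.comp i) :=
          Hom.ext (by simp) (by simp) (by simp)
        rw [hassoc]
        have hqj : (kCh V).comp (q.comp i) = (kCh V).comp (pCh V) := by
          refine Hom.ext (by simp [kCh, hq]) (by simp [kCh, hq]) ?_
          show (kCh V).c ≫ q.c ≫ i.c = (kCh V).c ≫ (pCh V).c
          erw [hqc, hs]
          rfl
        rw [hqj]
        exact (mkHom_eq_zero_iff _).mpr (k_p_null V)
      obtain ⟨t₁, t₀, -, e2, e3⟩ := hkq0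
      have hb0 : ((kCh V).comp q).b = 0 := by
        have : (kCh V).b ≫ q.b = (0 : (WObj V).B ⟶ Y.B) := by rw [hqb, comp_zero]
        exact this
      have e2' : (WObj V).g ≫ t₀ + t₁ ≫ Y.f = 0 := e2.symm.trans hb0
      have e2'' : kernel.ι V.g ≫ t₀ = -(t₁ ≫ Y.f) := eq_neg_of_add_eq_zero_left e2'
      have e3' : V.g ≫ s = t₀ ≫ Y.g := by
        have : (kCh V).c ≫ q.c = t₀ ≫ Y.g := e3
        rw [hqc] at this
        exact this
      have hrc1 : V.f ≫ t₀ = (-(kernel.lift V.g V.f V.w ≫ t₁)) ≫ Y.f := by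
        erw [Preadditive.neg_comp, Category.assoc, ← Preadditive.comp_neg, ← e2'',
          ← Category.assoc, kernel.lift_ι]
      obtain ⟨r, hr⟩ : ∃ r : Hom V Y,
          r = ⟨-(kernel.lift V.g V.f V.w ≫ t₁), t₀, s, hrc1, e3'⟩ := ⟨_, rfl⟩
      have hrc : r.c = s := by rw [hr]
      -- r is a two-sided inverse of i
      have h5 : mkHom (pCh V) ≫ mkHom r = mkHom q := by
        rw [mkHom_comp]
        refine congrArg mkHom (Hom.ext ?_ ?_ ?_)
        · show (0 : (P V.Z).A ⟶ V.A) ≫ r.a = q.a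
          rw [hq, hr]
          exact zero_comp
        · show (0 : (P V.Z).B ⟶ V.B) ≫ r.b = q.b
          rw [hq, hr]
          exact zero_comp
        · show (𝟙 V.Z : (P V.Z).Z ⟶ V.Z) ≫ r.c = q.c
          rw [hq, hrc]
          exact Category.id_comp s
      have h6 : mkHom r ≫ mkHom i = 𝟙 V := by
        apply p_cancel
        rw [← Category.assoc, h5, Category.comp_id, mkHom_comp]
        refine congrArg mkHom (Hom.ext ?_ ?_ ?_)
        · show q.a ≫ i.a = (pCh V).a
          rw [hq]
          exact zero_comp
        · show q.b ≫ i.b = (pCh V).b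
          rw [hq]
          exact zero_comp
        · show q.c ≫ i.c = (pCh V).c
          rw [hqc]
          exact hs
      have h7 : mkHom i ≫ mkHom r = 𝟙 Y := by
        rw [← cancel_mono (mkHom i), Category.assoc, h6, Category.comp_id, Category.id_comp]
      exact ⟨⟨mkHom r, h7, h6⟩⟩
end

section
/- Let C be a finite length abelian category, A the heart category as above, and C an indecomposable object of C admitting a right almost split map d : B \to C. Then L_C := [Ker d \to B \xrightarrow{d} C] is the unique simple quotient of P_C = [0 \to 0 \to C] in A (up to isomorphism). -/
open CategoryTheory Limits

section ARAux

namespace ARFitting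

open CategoryTheory Limits

variable {C : Type*} [Category C] [Abelian C]

/-- Iterates of an endomorphism. -/
def it {Z : C} (e : Z ⟶ Z) : ℕ → (Z ⟶ Z)
  | 0 => 𝟙 Z
  | n + 1 => it e n ≫ e

@[simp] lemma it_zero {Z : C} (e : Z ⟶ Z) : it e 0 = 𝟙 Z := rfl

lemma it_succ {Z : C} (e : Z ⟶ Z) (n : ℕ) : it e (n + 1) = it e n ≫ e := rfl

lemma it_comm {Z : C} (e : Z ⟶ Z) (n : ℕ) : it e n ≫ e = e ≫ it e n := by
  induction n with
  | zero => simp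
  | succ n ih =>
    calc it e (n + 1) ≫ e = (e ≫ it e n) ≫ e := by rw [it_succ, ih]
      _ = e ≫ it e (n + 1) := by rw [Category.assoc, it_succ]

lemma it_succ' {Z : C} (e : Z ⟶ Z) (n : ℕ) : it e (n + 1) = e ≫ it e n := by
  rw [it_succ, it_comm]

lemma epi_it {Z : C} (e : Z ⟶ Z) (he : Epi e) (n : ℕ) : Epi (it e n) := by
  induction n with
  | zero => rw [it_zero]; infer_instance
  | succ n ih => rw [it_succ]; haveI := ih; haveI := he; infer_instance

lemma isIso_it {Z : C} (e : Z ⟶ Z) (he : IsIso e) (n : ℕ) : IsIso (it e n) := by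
  induction n with
  | zero => rw [it_zero]; infer_instance
  | succ n ih => rw [it_succ]; haveI := ih; haveI := he; infer_instance

lemma it_conj {Z I : C} {e : Z ⟶ Z} {f : I ⟶ I} {i : I ⟶ Z} (h : f ≫ i = i ≫ e) (n : ℕ) :
    it f n ≫ i = i ≫ it e n := by
  induction n with
  | zero => simp
  | succ n ih =>
    rw [it_succ, it_succ, Category.assoc, h, ← Category.assoc, ih, Category.assoc]

lemma geom_comm {Z : C} (e : Z ⟶ Z) (n : ℕ) :
    (𝟙 Z - e) ≫ (∑ k ∈ Finset.range n, it e k) = 𝟙 Z - it e n ∧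
    (∑ k ∈ Finset.range n, it e k) ≫ (𝟙 Z - e) = 𝟙 Z - it e n := by
  induction n with
  | zero => simp
  | succ n ih =>
    rw [Finset.sum_range_succ]
    constructor
    · rw [Preadditive.comp_add, ih.1, Preadditive.sub_comp, Category.id_comp, ← it_succ']
      abel
    · rw [Preadditive.add_comp, ih.2, Preadditive.comp_sub, Category.comp_id, ← it_succ]
      abel

lemma isIso_of_epi_of_noetherian {Z : C} (hN : IsNoetherianObject Z) (e : Z ⟶ Z) (he : Epi e) :
    IsIso e := by
  haveI := he
  have hmono : Monotone fun n => kernelSubobject (it e n) := by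
    apply monotone_nat_of_le_succ
    intro n
    rw [it_succ]
    exact kernelSubobject_comp_le (it e n) e
  obtain ⟨n, hn⟩ :=
    (haveI := hN; WellFoundedGT.monotone_chain_condition ⟨_, hmono⟩)
  have hstab : kernelSubobject (it e n) = kernelSubobject (it e (n + 1)) :=
    hn (n + 1) (by omega)
  have hm : Mono e := by
    apply Preadditive.mono_of_cancel_zero
    intro W x hx
    haveI : Epi (it e n) := epi_it e he n
    haveI : Epi (pullback.fst x (it e n)) := inferInstance
    have hc : pullback.snd x (it e n) ≫ it e (n + 1) = 0 := by
      rw [it_succ, ← Category.assoc, ← pullback.condition, Category.assoc, hx, comp_zero]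
    have hfac : (kernelSubobject (it e n)).Factors (pullback.snd x (it e n)) := by
      rw [hstab]; exact kernelSubobject_factors _ _ hc
    have hz : pullback.snd x (it e n) ≫ it e n = 0 := by
      rw [← Subobject.factorThru_arrow _ _ hfac, Category.assoc, kernelSubobject_arrow_comp,
        comp_zero]
    have h0 : pullback.fst x (it e n) ≫ x = 0 := by rw [pullback.condition, hz]
    exact zero_of_epi_comp _ h0
  exact isIso_of_mono_of_epi e

lemma fitting (hFL : ∀ X : C, IsNoetherianObject X ∧ IsArtinianObject X) {Z : C}
    (hind : Indecomposable Z) (e : Z ⟶ Z) (he : ¬ IsIso e) : IsIso (𝟙 Z - e) := by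
  -- stabilize the chain of images
  have hmono : Monotone fun n => OrderDual.toDual (imageSubobject (it e n)) := by
    apply monotone_nat_of_le_succ
    intro n
    show imageSubobject (it e (n + 1)) ≤ imageSubobject (it e n)
    rw [it_succ']
    exact imageSubobject_comp_le e (it e n)
  have hwf : WellFounded ((· > ·) : (Subobject Z)ᵒᵈ → (Subobject Z)ᵒᵈ → Prop) :=
    (haveI := (hFL Z).2; wellFounded_gt)
  obtain ⟨n₀, hn₀⟩ := (haveI : WellFoundedGT (Subobject Z)ᵒᵈ := ⟨hwf⟩; WellFoundedGT.monotone_chain_condition ⟨_, hmono⟩)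
  set N := n₀ + 1 with hN
  have hstab : imageSubobject (it e (N + 1)) = imageSubobject (it e N) :=
    congrArg OrderDual.ofDual ((hn₀ (N + 1) (by omega)).symm.trans (hn₀ N (by omega)))
  set I := imageSubobject (it e N) with hI
  set ι : (I : C) ⟶ Z := I.arrow with hι
  set p : Z ⟶ (I : C) := factorThruImageSubobject (it e N) with hpdef
  have hp : p ≫ ι = it e N := imageSubobject_arrow_comp (it e N)
  -- the map t : Z ⟶ I with t ≫ ι = it e (N+1)
  set t : Z ⟶ (I : C) :=
    factorThruImageSubobject (it e (N + 1)) ≫ (Subobject.isoOfEq _ _ hstab).hom with htdef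
  have ht : t ≫ ι = it e (N + 1) := by
    rw [htdef, Category.assoc]
    have h1 : (Subobject.isoOfEq _ _ hstab).hom ≫ ι = (imageSubobject (it e (N + 1))).arrow := by
      simp [Subobject.isoOfEq, hι, Subobject.ofLE_arrow]
    rw [h1, imageSubobject_arrow_comp]
  haveI : Epi t := by
    rw [htdef]
    infer_instance
  haveI hmonoι : Mono ι := by rw [hι]; infer_instance
  -- the induced endomorphism of I
  haveI : Epi p := by rw [hpdef]; infer_instance
  have hkert : kernel.ι p ≫ t = 0 := by
    have h1 : (kernel.ι p ≫ t) ≫ ι = 0 := by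
      rw [Category.assoc, ht, it_succ, ← hp, ← Category.assoc, ← Category.assoc,
        kernel.condition, zero_comp, zero_comp]
    exact (cancel_mono ι).mp (by rw [h1, zero_comp])
  set f : (I : C) ⟶ (I : C) := Abelian.epiDesc p t hkert with hfdef
  have hpf : p ≫ f = t := Abelian.comp_epiDesc p t hkert
  have hfι : f ≫ ι = ι ≫ e := by
    apply (cancel_epi p).mp
    rw [← Category.assoc, hpf, ht, it_succ, ← hp, Category.assoc]
  haveI : Epi f := by
    haveI : Epi (p ≫ f) := by rw [hpf]; infer_instance
    exact epi_of_epi p f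
  haveI hfiso : IsIso f := isIso_of_epi_of_noetherian (hFL _).1 f inferInstance
  haveI : IsIso (it f N) := isIso_it f hfiso N
  have hitfι : it f N ≫ ι = ι ≫ it e N := it_conj hfι N
  -- the idempotent-like map q
  set q : Z ⟶ Z := p ≫ inv (it f N) ≫ ι with hqdef
  have hq : q ≫ it e N = it e N := by
    rw [hqdef, Category.assoc, Category.assoc, ← hitfι, ← Category.assoc (inv (it f N)),
      IsIso.inv_hom_id, Category.id_comp, hp]
  have hker2 : (𝟙 Z - q) ≫ it e N = 0 := by
    rw [Preadditive.sub_comp, Category.id_comp, hq, sub_self]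
  set m : Z ⟶ kernel (it e N) := kernel.lift (it e N) (𝟙 Z - q) hker2 with hmdef
  set κ : kernel (it e N) ⟶ Z := kernel.ι (it e N) with hκdef
  have hmκ : m ≫ κ = 𝟙 Z - q := kernel.lift_ι _ _ _
  set φ : kernel (it e N) ⊞ (I : C) ⟶ Z := biprod.desc κ ι with hφdef
  set ψ : Z ⟶ kernel (it e N) ⊞ (I : C) := biprod.lift m (p ≫ inv (it f N)) with hψdef
  have hψφ : ψ ≫ φ = 𝟙 Z := by
    rw [hψdef, hφdef, biprod.lift_desc, hmκ, hqdef]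
    simp only [Category.assoc]
    abel
  have hφdesc : φ = biprod.fst ≫ κ + biprod.snd ≫ ι := by
    apply biprod.hom_ext' <;> simp [hφdef]
  haveI hφmono : Mono φ := by
    apply Preadditive.mono_of_cancel_zero
    intro W x hx
    rw [hφdesc, Preadditive.comp_add, ← Category.assoc, ← Category.assoc] at hx
    have h2 : x ≫ biprod.snd ≫ ι ≫ it e N = 0 := by
      have h4 := congrArg (fun y => y ≫ it e N) hx
      simp only [Preadditive.add_comp, Category.assoc, zero_comp] at h4
      rw [hκdef, kernel.condition] at h4
      simpa using h4
    have h5 : (x ≫ biprod.snd) ≫ it f N = 0 := by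
      apply (cancel_mono ι).mp
      rw [Category.assoc, hitfι, zero_comp]
      simpa [Category.assoc] using h2
    have h6 : x ≫ biprod.snd = 0 := by
      have h7 := congrArg (fun y => y ≫ inv (it f N)) h5
      simpa using h7
    have h8 : x ≫ biprod.fst = 0 := by
      have h9 : (x ≫ biprod.fst) ≫ κ = 0 := by
        rw [h6, zero_comp, add_zero] at hx
        exact hx
      haveI : Mono κ := by rw [hκdef]; infer_instance
      exact (cancel_mono κ).mp (by rw [h9, zero_comp])
    apply biprod.hom_ext
    · rw [h8, zero_comp]
    · rw [h6, zero_comp]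
  have hφψ : φ ≫ ψ = 𝟙 _ := by
    apply (cancel_mono φ).mp
    rw [Category.assoc, hψφ, Category.comp_id, Category.id_comp]
  have hiso : Z ≅ kernel (it e N) ⊞ (I : C) := ⟨ψ, φ, hψφ, hφψ⟩
  rcases hind.2 _ _ hiso with hK | hIz
  · -- the kernel is zero: e is an isomorphism, contradiction
    exfalso
    apply he
    have hκ0 : κ = 0 := hK.eq_of_src κ 0
    have hmono' : Mono (it e N) := by
      apply Preadditive.mono_of_cancel_zero
      intro W x hx
      have h1 : x = kernel.lift (it e N) x hx ≫ κ := (kernel.lift_ι _ _ _).symm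
      rw [h1, hκ0, comp_zero]
    have hmonoe : Mono e := by
      haveI : Mono (e ≫ it e n₀) := by rw [← it_succ']; exact hmono'
      exact mono_of_mono e (it e n₀)
    have hq1 : q = 𝟙 Z := by
      rw [hκ0, comp_zero] at hmκ
      have h1 := hmκ.symm
      rw [sub_eq_zero] at h1
      exact h1.symm
    have hepiι : Epi ι := by
      have hsplit : (p ≫ inv (it f N)) ≫ ι = 𝟙 Z := by
        rw [Category.assoc, ← hqdef, hq1]
      haveI : Epi ((p ≫ inv (it f N)) ≫ ι) := by rw [hsplit]; infer_instance
      exact epi_of_epi (p ≫ inv (it f N)) ι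
    have hepie : Epi e := by
      haveI : Epi (p ≫ ι) := by haveI := hepiι; infer_instance
      haveI : Epi (it e n₀ ≫ e) := by rw [← it_succ, ← hp]; infer_instance
      exact epi_of_epi (it e n₀) e
    haveI := hmonoe; haveI := hepie
    exact isIso_of_mono_of_epi e
  · -- the image is zero: e is nilpotent
    have hι0 : ι = 0 := hIz.eq_of_src ι 0
    have hnil : it e N = 0 := by rw [← hp, hι0, comp_zero]
    refine ⟨⟨∑ k ∈ Finset.range N, it e k, ?_, ?_⟩⟩
    · rw [(geom_comm e N).1, hnil, sub_zero]
    · rw [(geom_comm e N).2, hnil, sub_zero]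

end ARFitting

namespace ARHeart

open CategoryTheory Limits

variable {C : Type*} [Category C] [Abelian C]

lemma mem_nullHomotopic_of_c_factors {V W : Obj C} (χ : Hom V W)
    (h : ∃ s₀ : V.Z ⟶ W.B, χ.c = s₀ ≫ W.g) : χ ∈ nullHomotopic V W := by
  obtain ⟨s₀, h3⟩ := h
  haveI : Mono (ShortComplex.mk W.f W.g W.w).f := W.mono
  have hb' : (χ.b - V.g ≫ s₀) ≫ (ShortComplex.mk W.f W.g W.w).g = 0 := by
    show (χ.b - V.g ≫ s₀) ≫ W.g = 0
    rw [Preadditive.sub_comp, Category.assoc, ← h3, ← χ.comm₂, sub_self]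
  refine ⟨W.exact.lift _ hb', s₀, ?_, ?_, h3⟩
  · haveI : Mono W.f := W.mono
    apply (cancel_mono W.f).mp
    have hl : (W.exact.lift _ hb') ≫ W.f = χ.b - V.g ≫ s₀ := W.exact.lift_f _ hb'
    rw [Category.assoc, hl, Preadditive.comp_sub, ← χ.comm₁, ← Category.assoc, V.w, zero_comp,
      sub_zero]
  · have hl : (W.exact.lift _ hb') ≫ W.f = χ.b - V.g ≫ s₀ := W.exact.lift_f _ hb'
    rw [hl]
    abel

lemma mkHom_eq_zero_iff_s14 {V W : Obj C} (χ : Hom V W) :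
    mkHom χ = 0 ↔ ∃ s₀ : V.Z ⟶ W.B, χ.c = s₀ ≫ W.g := by
  constructor
  · intro h
    obtain ⟨s₁, s₀, -, -, h3⟩ := (QuotientAddGroup.eq_zero_iff χ).mp h
    exact ⟨s₀, h3⟩
  · intro h
    exact (QuotientAddGroup.eq_zero_iff χ).mpr (mem_nullHomotopic_of_c_factors χ h)

lemma mkHom_eq_of_c_eq {V W : Obj C} {χ χ' : Hom V W} (h : χ.c = χ'.c) :
    mkHom χ = mkHom χ' := by
  have h0 : mkHom (χ - χ') = (0 : V ⟶ W) :=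
    (mkHom_eq_zero_iff_s14 _).mpr ⟨0, by simp [h]⟩
  have h1 : mkHom χ - mkHom χ' = 0 := h0
  exact sub_eq_zero.mp h1

/-- The canonical chain map `P V.Z ⟶ V`. -/
noncomputable def piHom (V : Obj C) : Hom (P V.Z) V where
  a := 0
  b := 0
  c := 𝟙 V.Z
  comm₁ := by simp
  comm₂ := by simp [P]; exact zero_comp.symm

lemma epi_pi (V : Obj C) : Epi (mkHom (piHom V)) := by
  apply Preadditive.epi_of_cancel_zero
  intro R ψq hψ
  obtain ⟨ψ, rfl⟩ := mkHom_surjective ψq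
  rw [mkHom_comp] at hψ
  obtain ⟨s₀, hs⟩ := (mkHom_eq_zero_iff_s14 _).mp hψ
  refine (mkHom_eq_zero_iff_s14 _).mpr ⟨s₀, ?_⟩
  have h1 : ((piHom V).comp ψ).c = 𝟙 V.Z ≫ ψ.c := rfl
  rw [h1, Category.id_comp] at hs
  exact hs

end ARHeart

end ARAux


open CategoryTheory Limits ARHeart in
/-- if `C` is an indecomposable object of a finite length abelian
category admitting a right almost split map `d : B ⟶ C`, then
`L_C = [Ker d ⟶ B —d→ C]` is the unique simple quotient of `P_C = [0 ⟶ 0 ⟶ C]`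
in the heart `𝒜`. -/
theorem stmt14 {C : Type*} [Category C] [Abelian C]
    (hFL : ∀ X : C, IsNoetherianObject X ∧ IsArtinianObject X)
    {B Z : C} (hind : Indecomposable Z) (d : B ⟶ Z) (hd : RightAlmostSplit d) :
    Simple (ARHeart.kernelObj d) ∧
    (∃ p : ARHeart.P Z ⟶ ARHeart.kernelObj d, Epi p) ∧
    (∀ (S : ARHeart.Obj C) (q : ARHeart.P Z ⟶ S), Simple S → Epi q →
      Nonempty (S ≅ ARHeart.kernelObj d)) := by
  classical
  -- basic consequences of the right almost split property
  have hfac : ∀ {X : C} (x : X ⟶ Z), (¬ ∃ h : X ⟶ B, h ≫ d = x) → ∃ s : Z ⟶ X, s ≫ x = 𝟙 Z := by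
    intro X x hx
    by_contra hs
    exact hx (hd.2 X x hs)
  -- the canonical epimorphism p : P Z ⟶ L
  have hepi_p : Epi (mkHom (piHom (kernelObj d)) : P Z ⟶ kernelObj d) := epi_pi (kernelObj d)
  -- the identity of L is nonzero
  have hidnz : (𝟙 (kernelObj d) : kernelObj d ⟶ kernelObj d) ≠ 0 := by
    intro h
    obtain ⟨s₀, hs₀⟩ := (mkHom_eq_zero_iff_s14 (Hom.id (kernelObj d))).mp h
    exact hd.1 ⟨s₀, hs₀.symm⟩
  -- key splitting lemma: a nonzero map into L which is "left cancellable on P B" is split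
  have key : ∀ (Y : Obj C) (ψ : Hom Y (kernelObj d)),
      mkHom ψ ≠ 0 → (∀ gq : P B ⟶ Y, gq ≫ mkHom ψ = 0 → gq = 0) →
      ∃ σ : kernelObj d ⟶ Y, σ ≫ mkHom ψ = 𝟙 (kernelObj d) := by
    intro Y ψ hne hcan
    have hnofac : ¬ ∃ h : Y.Z ⟶ B, h ≫ d = ψ.c := by
      rintro ⟨h, hh⟩
      exact hne ((mkHom_eq_zero_iff_s14 ψ).mpr ⟨h, hh.symm⟩)
    obtain ⟨s, hs⟩ := hfac ψ.c hnofac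
    let gch : Hom (P B) Y := ⟨0, 0, d ≫ s, by simp, by simp [P]; exact zero_comp.symm⟩
    have hzero : mkHom gch ≫ mkHom ψ = 0 := by
      rw [mkHom_comp]
      refine (mkHom_eq_zero_iff_s14 _).mpr ⟨𝟙 B, ?_⟩
      show (d ≫ s) ≫ ψ.c = 𝟙 B ≫ d
      erw [Category.assoc, hs, Category.comp_id, Category.id_comp]
    have hg0 : mkHom gch = 0 := hcan _ hzero
    obtain ⟨s₀, hs₀⟩ := (mkHom_eq_zero_iff_s14 _).mp hg0
    -- hs₀ : d ≫ s = s₀ ≫ Y.g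
    have hs₀' : d ≫ s = s₀ ≫ Y.g := hs₀
    haveI : Mono (ShortComplex.mk Y.f Y.g Y.w).f := Y.mono
    have hker : ((kernelObj d).f ≫ s₀) ≫ (ShortComplex.mk Y.f Y.g Y.w).g = 0 := by
      show (kernel.ι d ≫ s₀) ≫ Y.g = 0
      erw [Category.assoc, ← hs₀', ← Category.assoc, kernel.condition, zero_comp]
    let σch : Hom (kernelObj d) Y :=
      ⟨Y.exact.lift _ hker, s₀, s, (Y.exact.lift_f _ hker).symm, hs₀'⟩
    refine ⟨mkHom σch, ?_⟩
    rw [mkHom_comp]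
    show mkHom (σch.comp ψ) = mkHom (Hom.id (kernelObj d))
    exact mkHom_eq_of_c_eq hs
  -- Part 1: L is simple
  have hsimple : Simple (kernelObj d) := by
    constructor
    intro Y mq hmono
    constructor
    · intro hiso h0
      apply hidnz
      calc 𝟙 (kernelObj d) = inv mq ≫ mq := (IsIso.inv_hom_id mq).symm
        _ = inv mq ≫ 0 := congrArg (fun t => inv mq ≫ t) h0
        _ = 0 := comp_zero
    · intro hne
      obtain ⟨ψ, rfl⟩ := mkHom_surjective mq
      obtain ⟨σ, hσ⟩ := key Y ψ hne (fun gq hg => by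
        haveI := hmono
        exact (cancel_mono (mkHom ψ)).mp (by rw [hg, zero_comp]))
      have hms : mkHom ψ ≫ σ = 𝟙 Y := by
        haveI := hmono
        apply (cancel_mono (mkHom ψ)).mp
        rw [Category.assoc, hσ, Category.comp_id, Category.id_comp]
      exact ⟨⟨σ, hms, hσ⟩⟩
  refine ⟨hsimple, ⟨mkHom (piHom (kernelObj d)), hepi_p⟩, ?_⟩
  -- Part 3: uniqueness of the simple quotient
  intro S q hS hq
  haveI := hS
  obtain ⟨χq, rfl⟩ := mkHom_surjective q
  have hqne : mkHom χq ≠ 0 := by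
    intro h0
    have h1 : 𝟙 S = (0 : S ⟶ S) := by
      haveI := hq
      apply (cancel_epi (mkHom χq)).mp
      simp [h0]
    exact id_nonzero S h1
  have hufac : ¬ ∃ s₀ : Z ⟶ S.B, χq.c = s₀ ≫ S.g := by
    rintro ⟨s₀, h⟩
    exact hqne ((mkHom_eq_zero_iff_s14 χq).mpr ⟨s₀, h⟩)
  haveI : Mono (ShortComplex.mk S.f S.g S.w).f := S.mono
  -- Step (2a): d ≫ u factors through S.g
  have h2a : ∃ b₀ : B ⟶ S.B, d ≫ χq.c = b₀ ≫ S.g := by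
    by_contra h2a
    have hker : (kernel.ι (pullback.fst (d ≫ χq.c) S.g) ≫ pullback.snd (d ≫ χq.c) S.g) ≫
        (ShortComplex.mk S.f S.g S.w).g = 0 := by
      show (kernel.ι (pullback.fst (d ≫ χq.c) S.g) ≫ pullback.snd (d ≫ χq.c) S.g) ≫ S.g = 0
      rw [Category.assoc, ← pullback.condition, ← Category.assoc, kernel.condition, zero_comp]
    let μch : Hom (kernelObj (pullback.fst (d ≫ χq.c) S.g)) S :=
      ⟨S.exact.lift _ hker, pullback.snd _ _, d ≫ χq.c,
        (S.exact.lift_f _ hker).symm, pullback.condition⟩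
    have hμmono : Mono (mkHom μch) := by
      apply Preadditive.mono_of_cancel_zero
      intro V ρq hρ
      obtain ⟨ρ, rfl⟩ := mkHom_surjective ρq
      rw [mkHom_comp] at hρ
      obtain ⟨s₀, hs₀⟩ := (mkHom_eq_zero_iff_s14 _).mp hρ
      have hs₀' : ρ.c ≫ (d ≫ χq.c) = s₀ ≫ S.g := hs₀
      refine (mkHom_eq_zero_iff_s14 _).mpr ⟨pullback.lift ρ.c s₀ hs₀', ?_⟩
      exact (pullback.lift_fst _ _ _).symm
    have hμne : mkHom μch ≠ 0 := by
      intro h0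
      obtain ⟨s₀, h⟩ := (mkHom_eq_zero_iff_s14 _).mp h0
      exact h2a ⟨s₀, h⟩
    haveI := hμmono
    haveI : IsIso (mkHom μch) := isIso_of_mono_of_nonzero hμne
    obtain ⟨ρ, hρ⟩ := mkHom_surjective (mkHom χq ≫ inv (mkHom μch))
    have hcomp : mkHom (ρ.comp μch) = mkHom χq := by
      rw [← mkHom_comp, hρ, Category.assoc, IsIso.inv_hom_id, Category.comp_id]
    have hdiff : mkHom (ρ.comp μch - χq) = (0 : P Z ⟶ S) := by
      have h1 : mkHom (ρ.comp μch) - mkHom χq = 0 := by rw [hcomp, sub_self]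
      exact h1
    obtain ⟨s, hsg⟩ := (mkHom_eq_zero_iff_s14 _).mp hdiff
    -- hsg : (ρ.comp μch - χq).c = s ≫ S.g, i.e. ρ.c ≫ (d ≫ χq.c) - χq.c = s ≫ S.g
    let w : Z ⟶ B := ρ.c
    let u : Z ⟶ S.Z := χq.c
    let s' : Z ⟶ S.B := s
    have hsg' : w ≫ (d ≫ u) - u = s' ≫ S.g := hsg
    have henotiso : ¬ IsIso (w ≫ d) := by
      intro hei
      refine hd.1 ⟨inv (w ≫ d) ≫ w, ?_⟩
      rw [Category.assoc, IsIso.inv_hom_id]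
    have hii : IsIso (𝟙 Z - w ≫ d) := ARFitting.fitting hFL hind (w ≫ d) henotiso
    apply hufac
    refine ⟨inv (𝟙 Z - w ≫ d) ≫ (-s'), ?_⟩
    show u = (inv (𝟙 Z - w ≫ d) ≫ (-s')) ≫ S.g
    have h1 : (𝟙 Z - w ≫ d) ≫ u = (-s') ≫ S.g := by
      have h2 : (𝟙 Z - w ≫ d) ≫ u = u - w ≫ (d ≫ u) := by
        rw [Preadditive.sub_comp, Category.id_comp, Category.assoc]
      rw [h2, Preadditive.neg_comp, ← hsg']
      abel
    calc u = inv (𝟙 Z - w ≫ d) ≫ ((𝟙 Z - w ≫ d) ≫ u) := by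
          rw [← Category.assoc, IsIso.inv_hom_id, Category.id_comp]
      _ = inv (𝟙 Z - w ≫ d) ≫ (-s') ≫ S.g := by rw [h1]
      _ = (inv (𝟙 Z - w ≫ d) ≫ (-s')) ≫ S.g := by rw [Category.assoc]
  obtain ⟨b₀, hb₀⟩ := h2a
  -- the comparison map m : L ⟶ S
  have hker' : ((kernelObj d).f ≫ b₀) ≫ (ShortComplex.mk S.f S.g S.w).g = 0 := by
    show (kernel.ι d ≫ b₀) ≫ S.g = 0
    erw [Category.assoc, ← hb₀, ← Category.assoc, kernel.condition, zero_comp]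
  let mch : Hom (kernelObj d) S :=
    ⟨S.exact.lift _ hker', b₀, χq.c, (S.exact.lift_f _ hker').symm, hb₀⟩
  have hmne : mkHom mch ≠ 0 := by
    intro h0
    obtain ⟨s₀, h⟩ := (mkHom_eq_zero_iff_s14 _).mp h0
    exact hufac ⟨s₀, h⟩
  have hmmono : Mono (mkHom mch) := by
    apply Preadditive.mono_of_cancel_zero
    intro V ρq hρ
    obtain ⟨ρ, rfl⟩ := mkHom_surjective ρq
    rw [mkHom_comp] at hρ
    obtain ⟨s₀, hs₀⟩ := (mkHom_eq_zero_iff_s14 _).mp hρ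
    have hs₀' : ρ.c ≫ χq.c = s₀ ≫ S.g := hs₀
    by_cases hf : ∃ h : V.Z ⟶ B, h ≫ d = ρ.c
    · obtain ⟨h, hh⟩ := hf
      exact (mkHom_eq_zero_iff_s14 _).mpr ⟨h, hh.symm⟩
    · obtain ⟨t, ht⟩ := hfac ρ.c hf
      refine absurd ?_ hufac
      refine ⟨t ≫ s₀, ?_⟩
      erw [Category.assoc, ← hs₀', ← Category.assoc, ht, Category.id_comp]
  haveI := hmmono
  haveI : IsIso (mkHom mch) := isIso_of_mono_of_nonzero hmne
  exact ⟨(asIso (mkHom mch)).symm⟩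
end
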